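/- Let F be a weakly convex sparseness measure, J(x) = Σ_{i=1}^N F(x_i), and let γ ∈ [0,1) be a null-space constant bound for (J,A,K). Let M0 > 0 and define C1 = (F(M0)/M0)·(1−γ)/(1+γ) and C2 = (α√N + C1)/(C1·σ). Then for all vectors x*, x ∈ ℝ^N with ‖x*‖₀ ≤ K and ‖x − x*‖₂ ≤ M0, one has J(x) − J(x*) ≥ C1·(‖x − x*‖₂ − C2·‖A(x − x*)‖₂). -/

import Mathlib

open Filter Set

/-- Weak convexity on `[0,∞)` with parameter `ρ`. -/
def WeaklyConvexOnNonneg (F : ℝ → ℝ) (ρ : ℝ) : Prop :=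
  ∀ t₁ t₂ : ℝ, 0 ≤ t₁ → 0 ≤ t₂ → ∀ l : ℝ, 0 ≤ l → l ≤ 1 →
    F (l * t₁ + (1 - l) * t₂) ≤
      l * F t₁ + (1 - l) * F t₂ - ρ * l * (1 - l) * (t₁ - t₂) ^ 2

/-- `F` is a weakly convex sparseness measure with weak-convexity parameter `ρ ≤ 0`. -/
structure IsWCSM (F : ℝ → ℝ) (ρ : ℝ) : Prop where
  zero : F 0 = 0
  even : ∀ t, F (-t) = F t
  nontrivial : ∃ t, F t ≠ 0
  mono : ∀ s t : ℝ, 0 ≤ s → s ≤ t → F s ≤ F t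
  ratio_anti : ∀ s t : ℝ, 0 < s → s ≤ t → F t / t ≤ F s / s
  rho_nonpos : ρ ≤ 0
  wconv : WeaklyConvexOnNonneg F ρ

/-- `α = lim_{t→0⁺} F(t)/t`, finite and positive, with `F(t) ≤ α|t|` for all `t`. -/
def IsAlpha (F : ℝ → ℝ) (α : ℝ) : Prop :=
  0 < α ∧ Tendsto (fun t => F t / t) (nhdsWithin 0 (Set.Ioi 0)) (nhds α) ∧
    ∀ t : ℝ, F t ≤ α * |t|

/-- The generalized gradient set `∂F(t)`; by convention `∂F(0) = {0}`. -/
noncomputable def genGrad (F : ℝ → ℝ) (t : ℝ) : Set ℝ :=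
  if t = 0 then {0}
  else {f : ℝ | ∀ ν : ℝ,
    ν * f ≤ Filter.limsup (fun θ => (F (t + θ * ν) - F t) / θ) (nhdsWithin 0 (Set.Ioi 0))}

/-- Euclidean (`ℓ2`) norm of a vector. -/
noncomputable def l2 {n : ℕ} (x : Fin n → ℝ) : ℝ := Real.sqrt (∑ i, (x i) ^ 2)

/-- `ℓ1` norm of a vector. -/
def l1 {n : ℕ} (x : Fin n → ℝ) : ℝ := ∑ i, |x i|

/-- `ℓ0` "norm": number of nonzero entries. -/
noncomputable def l0 {n : ℕ} (x : Fin n → ℝ) : ℕ :=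
  (Finset.univ.filter (fun i => x i ≠ 0)).card

/-- `z_S`: the vector equal to `z` on `S` and zero elsewhere. -/
def restr {n : ℕ} (x : Fin n → ℝ) (S : Finset (Fin n)) : Fin n → ℝ :=
  fun i => if i ∈ S then x i else 0

/-- `γ` is a null-space-constant bound for `(J, A, K)`. -/
def NSCBound {M N : ℕ} (J : (Fin N → ℝ) → ℝ) (A : Matrix (Fin M) (Fin N) ℝ)
    (K : ℕ) (γ : ℝ) : Prop :=
  ∀ z : Fin N → ℝ, A.mulVec z = 0 → ∀ S : Finset (Fin N), S.card ≤ K →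
    J (restr z S) ≤ γ * J (restr z Sᶜ)

/-- Spectral norm (`ℓ2`-operator norm) of a matrix. -/
noncomputable def opNorm2 {m n : ℕ} (A : Matrix (Fin m) (Fin n) ℝ) : ℝ :=
  sSup {c : ℝ | ∃ v : Fin n → ℝ, l2 v ≤ 1 ∧ c = l2 (A.mulVec v)}


/-!
Write `h = x - x*` as `z + v` with `z ∈ ker A` and `v ⊥ ker A`, and let `S` be the support of
`x*`. Subadditivity of `F` gives `J(x) - J(x*) ≥ J(z_{Sᶜ}) - J(z_S) - J(v)`, and the null-space
bound turns the right-hand side into at least `(1 - γ)/(1 + γ) · J(z) - J(v)`. Since `F(t)/t` is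
non-increasing, `J(z) ≥ F(M0)/M0 · ‖z‖₁ ≥ F(M0)/M0 · (‖h‖₂ - ‖v‖₂)` as long as `‖z‖₂ ≤ ‖h‖₂ ≤ M0`,
while `J(v) ≤ α‖v‖₁ ≤ α√N‖v‖₂`. Finally `‖v‖₂ ≤ ‖Av‖₂ / σ = ‖Ah‖₂ / σ`.
-/

open Matrix

namespace IsWCSM

variable {F : ℝ → ℝ} {ρ : ℝ}

lemma apply_abs (hF : IsWCSM F ρ) (t : ℝ) : F |t| = F t := by
  rcases abs_choice t with h | h <;> simp [h, hF.even]

lemma nonneg (hF : IsWCSM F ρ) (t : ℝ) : 0 ≤ F t := by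
  simpa [hF.zero, hF.apply_abs] using hF.mono 0 |t| le_rfl (abs_nonneg t)

lemma add_le_of_nonneg (hF : IsWCSM F ρ) {s t : ℝ} (hs : 0 ≤ s) (ht : 0 ≤ t) :
    F (s + t) ≤ F s + F t := by
  rcases hs.eq_or_lt with rfl | hs
  · simp [hF.zero]
  rcases ht.eq_or_lt with rfl | ht
  · simp [hF.zero]
  have hst : 0 < s + t := add_pos hs ht
  calc F (s + t) = s * (F (s + t) / (s + t)) + t * (F (s + t) / (s + t)) := by
        field_simp
    _ ≤ s * (F s / s) + t * (F t / t) :=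
        add_le_add (mul_le_mul_of_nonneg_left (hF.ratio_anti s _ hs (by linarith)) hs.le)
          (mul_le_mul_of_nonneg_left (hF.ratio_anti t _ ht (by linarith)) ht.le)
    _ = F s + F t := by field_simp

lemma add_le (hF : IsWCSM F ρ) (a b : ℝ) : F (a + b) ≤ F a + F b := by
  rw [← hF.apply_abs (a + b), ← hF.apply_abs a, ← hF.apply_abs b]
  calc F |a + b| ≤ F (|a| + |b|) := hF.mono _ _ (abs_nonneg _) (abs_add_le a b)
    _ ≤ F |a| + F |b| := hF.add_le_of_nonneg (abs_nonneg a) (abs_nonneg b)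

lemma sub_le (hF : IsWCSM F ρ) (a b : ℝ) : F (a - b) ≤ F a + F b := by
  simpa [sub_eq_add_neg, hF.even] using hF.add_le a (-b)

lemma pos (hF : IsWCSM F ρ) {t : ℝ} (ht : 0 < t) : 0 < F t := by
  obtain ⟨s, hs⟩ := hF.nontrivial
  have hs0 : 0 < |s| := abs_pos.mpr (by rintro rfl; exact hs hF.zero)
  have hFs : 0 < F |s| := by rw [hF.apply_abs]; exact (hF.nonneg s).lt_of_ne' hs
  rcases le_total |s| t with hst | hts
  · exact hFs.trans_le (hF.mono _ _ hs0.le hst)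
  · exact (div_pos_iff_of_pos_right ht).mp ((div_pos hFs hs0).trans_le (hF.ratio_anti t _ ht hts))

lemma div_mul_abs_le (hF : IsWCSM F ρ) {M0 t : ℝ} (ht : |t| ≤ M0) :
    F M0 / M0 * |t| ≤ F t := by
  rcases eq_or_ne t 0 with rfl | ht0
  · simp [hF.zero]
  have habs : 0 < |t| := abs_pos.mpr ht0
  rw [← le_div_iff₀ habs, ← hF.apply_abs t]
  exact hF.ratio_anti |t| M0 habs ht

end IsWCSM

section Norms

variable {n : ℕ}

lemma l2_eq_norm (x : Fin n → ℝ) : l2 x = ‖(WithLp.toLp 2 x : EuclideanSpace ℝ (Fin n))‖ := by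
  simp [l2, EuclideanSpace.norm_eq]

lemma l2_add_le (x y : Fin n → ℝ) : l2 (x + y) ≤ l2 x + l2 y := by
  simpa only [l2_eq_norm, WithLp.toLp_add] using
    norm_add_le (WithLp.toLp 2 x : EuclideanSpace ℝ (Fin n)) _

lemma abs_le_l2 (x : Fin n → ℝ) (i : Fin n) : |x i| ≤ l2 x := by
  simpa only [l2_eq_norm, Real.norm_eq_abs] using
    PiLp.norm_apply_le (WithLp.toLp 2 x : EuclideanSpace ℝ (Fin n)) i

lemma l2_le_sum_abs (x : Fin n → ℝ) : l2 x ≤ ∑ i, |x i| := by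
  refine Real.sqrt_le_iff.mpr ⟨Finset.sum_nonneg fun i _ => abs_nonneg _, ?_⟩
  simpa only [sq_abs] using Finset.sum_sq_le_sq_sum_of_nonneg fun i _ => abs_nonneg (x i)

lemma sum_abs_le_sqrt_mul_l2 (x : Fin n → ℝ) : ∑ i, |x i| ≤ √n * l2 x := by
  rw [l2, ← Real.sqrt_mul n.cast_nonneg]
  refine Real.le_sqrt_of_sq_le ?_
  simpa only [sq_abs, Finset.card_univ, Fintype.card_fin] using
    sq_sum_le_card_mul_sum_sq (s := Finset.univ) (f := fun i => |x i|)

end Norms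

lemma sum_apply_restr {n : ℕ} {F : ℝ → ℝ} (hF0 : F 0 = 0) (y : Fin n → ℝ) (S : Finset (Fin n)) :
    ∑ i, F (restr y S i) = ∑ i ∈ S, F (y i) := by
  simp [restr, apply_ite F, hF0, Finset.sum_ite_mem]

lemma sum_le_mul_sqrt_mul_l2 {n : ℕ} {F : ℝ → ℝ} {α : ℝ} (hα : 0 ≤ α)
    (hFα : ∀ t, F t ≤ α * |t|) (v : Fin n → ℝ) : ∑ i, F (v i) ≤ α * √n * l2 v := by
  calc ∑ i, F (v i) ≤ ∑ i, α * |v i| := Finset.sum_le_sum fun i _ => hFα (v i)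
    _ = α * ∑ i, |v i| := (Finset.mul_sum ..).symm
    _ ≤ α * √n * l2 v := by rw [mul_assoc]; gcongr; exact sum_abs_le_sqrt_mul_l2 v

lemma exists_add_mulVec_eq_zero_orthogonal {m : Type*} {n : ℕ} (A : Matrix m (Fin n) ℝ)
    (h : Fin n → ℝ) :
    ∃ z v : Fin n → ℝ, h = z + v ∧ A *ᵥ z = 0 ∧
      (∀ w : Fin n → ℝ, A *ᵥ w = 0 → ∑ i, v i * w i = 0) ∧ l2 z ≤ l2 h := by
  let ker : Submodule ℝ (EuclideanSpace ℝ (Fin n)) :=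
    LinearMap.ker (A.mulVecLin ∘ₗ (WithLp.linearEquiv 2 ℝ (Fin n → ℝ)).toLinearMap)
  have mem_ker (w : EuclideanSpace ℝ (Fin n)) : w ∈ ker ↔ A *ᵥ w.ofLp = 0 := by simp [ker]
  let hE : EuclideanSpace ℝ (Fin n) := WithLp.toLp 2 h
  refine ⟨(ker.starProjection hE).ofLp, (hE - ker.starProjection hE).ofLp, by simp [hE],
    (mem_ker _).mp (ker.starProjection_apply_mem hE), fun w hw => ?_, ?_⟩
  · have := (Submodule.mem_orthogonal' ker _).mp (ker.sub_starProjection_mem_orthogonal hE)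
      (WithLp.toLp 2 w) ((mem_ker _).mpr hw)
    simpa [PiLp.inner_apply, mul_comm] using this
  · simpa only [l2_eq_norm] using ker.norm_starProjection_apply_le hE

namespace IsWCSM

variable {F : ℝ → ℝ} {ρ : ℝ} {n : ℕ}

lemma div_mul_l2_le_sum (hF : IsWCSM F ρ) {M0 : ℝ} (hM0 : 0 < M0) {z : Fin n → ℝ}
    (hz : l2 z ≤ M0) : F M0 / M0 * l2 z ≤ ∑ i, F (z i) := by
  calc F M0 / M0 * l2 z ≤ F M0 / M0 * ∑ i, |z i| := by
        gcongr
        · exact div_nonneg (hF.nonneg _) hM0.le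
        · exact l2_le_sum_abs z
    _ = ∑ i, F M0 / M0 * |z i| := Finset.mul_sum ..
    _ ≤ ∑ i, F (z i) :=
        Finset.sum_le_sum fun i _ => hF.div_mul_abs_le ((abs_le_l2 z i).trans hz)

lemma sum_compl_sub_sum_sub_sum_le (hF : IsWCSM F ρ) {S : Finset (Fin n)}
    {xs x z v : Fin n → ℝ} (hS : ∀ i ∉ S, xs i = 0) (hzv : x - xs = z + v) :
    ∑ i ∈ Sᶜ, F (z i) - ∑ i ∈ S, F (z i) - ∑ i, F (v i) ≤ ∑ i, F (x i) - ∑ i, F (xs i) := by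
  have hx (i : Fin n) : x i = xs i + (z i + v i) := by
    rw [← Pi.add_apply z v, ← hzv, Pi.sub_apply]; ring
  have on_S : ∑ i ∈ S, (-F (z i) - F (v i)) ≤ ∑ i ∈ S, (F (x i) - F (xs i)) :=
    Finset.sum_le_sum fun i _ => by
      have h1 := hF.sub_le (xs i + (z i + v i)) (z i + v i)
      rw [add_sub_cancel_right, ← hx i] at h1
      linarith [hF.add_le (z i) (v i)]
  have on_Sc : ∑ i ∈ Sᶜ, (F (z i) - F (v i)) ≤ ∑ i ∈ Sᶜ, (F (x i) - F (xs i)) :=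
    Finset.sum_le_sum fun i hi => by
      have hxi : x i = z i + v i := by rw [hx i, hS i (Finset.mem_compl.mp hi), zero_add]
      have h1 := hF.sub_le (x i) (v i)
      rw [hxi, add_sub_cancel_right] at h1
      rw [hS i (Finset.mem_compl.mp hi), hF.zero, hxi]
      linarith
  rw [← Finset.sum_add_sum_compl S fun i => F (v i), ← Finset.sum_add_sum_compl S fun i => F (x i),
    ← Finset.sum_add_sum_compl S fun i => F (xs i)]
  simp only [Finset.sum_sub_distrib, Finset.sum_neg_distrib] at on_S on_Sc
  linarith

lemma div_mul_sum_sub_sum_le (hF : IsWCSM F ρ) {γ : ℝ} (hγ : -1 < γ) {S : Finset (Fin n)}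
    {xs x z v : Fin n → ℝ} (hS : ∀ i ∉ S, xs i = 0) (hzv : x - xs = z + v)
    (hnsp : ∑ i ∈ S, F (z i) ≤ γ * ∑ i ∈ Sᶜ, F (z i)) :
    (1 - γ) / (1 + γ) * ∑ i, F (z i) - ∑ i, F (v i) ≤ ∑ i, F (x i) - ∑ i, F (xs i) := by
  suffices (1 - γ) / (1 + γ) * ∑ i, F (z i) ≤ ∑ i ∈ Sᶜ, F (z i) - ∑ i ∈ S, F (z i) by
    linarith [hF.sum_compl_sub_sum_sub_sum_le hS hzv]
  rw [← Finset.sum_add_sum_compl S, div_mul_eq_mul_div, div_le_iff₀ (by linarith)]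
  linarith

end IsWCSM

theorem stmt9_general {M N : ℕ} (F : ℝ → ℝ) (ρ α : ℝ)
    (hF : IsWCSM F ρ) (hα : IsAlpha F α)
    (A : Matrix (Fin M) (Fin N) ℝ) (K : ℕ)
    (γ : ℝ) (hγ0 : 0 ≤ γ) (hγ1 : γ < 1)
    (hNSC : NSCBound (fun x => ∑ i, F (x i)) A K γ)
    (σ : ℝ) (hσ : 0 < σ)
    (hσmin : ∀ v : Fin N → ℝ,
      (∀ z : Fin N → ℝ, A.mulVec z = 0 → (∑ i, v i * z i) = 0) →
      σ * l2 v ≤ l2 (A.mulVec v))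
    (M0 : ℝ) (hM0 : 0 < M0) (C1 C2 : ℝ)
    (hC1 : C1 = F M0 / M0 * ((1 - γ) / (1 + γ)))
    (hC2 : C2 = (α * Real.sqrt N + C1) / (C1 * σ)) :
    ∀ xs x : Fin N → ℝ, l0 xs ≤ K → l2 (x - xs) ≤ M0 →
      C1 * (l2 (x - xs) - C2 * l2 (A.mulVec (x - xs))) ≤
        (∑ i, F (x i)) - ∑ i, F (xs i) := by
  intro xs x hK hM
  obtain ⟨z, v, hzv, hAz, hv, hzh⟩ := exists_add_mulVec_eq_zero_orthogonal A (x - xs)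
  have hS : ∀ i ∉ Finset.univ.filter (xs · ≠ 0), xs i = 0 := by simp
  have hJ := hF.div_mul_sum_sub_sum_le (neg_one_lt_zero.trans_le hγ0) hS hzv <| by
    simpa only [sum_apply_restr hF.zero] using hNSC z hAz _ hK
  have hJz := hF.div_mul_l2_le_sum hM0 (hzh.trans hM)
  have hJv := sum_le_mul_sqrt_mul_l2 hα.1.le hα.2.2 v
  have hσv : σ * l2 v ≤ l2 (A *ᵥ (x - xs)) := by
    rw [hzv, mulVec_add, hAz, zero_add]; exact hσmin v hv
  have htri : l2 (x - xs) ≤ l2 z + l2 v := hzv ▸ l2_add_le z v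
  have hq : 0 ≤ (1 - γ) / (1 + γ) := div_nonneg (by linarith) (by linarith)
  have hC1pos : 0 < C1 :=
    hC1 ▸ mul_pos (div_pos (hF.pos hM0) hM0) (div_pos (by linarith) (by linarith))
  have hC1C2 : C1 * C2 * σ = α * √N + C1 := by rw [hC2]; field_simp
  have hC1C2_nonneg : 0 ≤ C1 * C2 := by
    nlinarith [mul_nonneg hα.1.le (Real.sqrt_nonneg (N : ℝ))]
  calc C1 * (l2 (x - xs) - C2 * l2 (A *ᵥ (x - xs)))
      ≤ C1 * l2 (x - xs) - C1 * C2 * (σ * l2 v) := by nlinarith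
    _ = C1 * (l2 (x - xs) - l2 v) - α * √N * l2 v := by rw [← mul_assoc, hC1C2]; ring
    _ ≤ (1 - γ) / (1 + γ) * (F M0 / M0 * l2 z) - α * √N * l2 v := by
        rw [hC1, mul_comm (F M0 / M0), mul_assoc]
        gcongr
        · exact div_nonneg (hF.nonneg _) hM0.le
        · linarith
    _ ≤ (1 - γ) / (1 + γ) * ∑ i, F (z i) - ∑ i, F (v i) := by gcongr
    _ ≤ (∑ i, F (x i)) - ∑ i, F (xs i) := hJ

/-- Lemma 3: `J(x) − J(x*) ≥ C1(‖x − x*‖₂ − C2‖A(x − x*)‖₂)`. -/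
theorem stmt9 {M N : ℕ} (hMN : M < N) (F : ℝ → ℝ) (ρ α : ℝ)
    (hF : IsWCSM F ρ) (hα : IsAlpha F α)
    (A : Matrix (Fin M) (Fin N) ℝ) (K : ℕ)
    (γ : ℝ) (hγ0 : 0 ≤ γ) (hγ1 : γ < 1)
    (hNSC : NSCBound (fun x => ∑ i, F (x i)) A K γ)
    (σ : ℝ) (hσ : 0 < σ)
    (hσmin : ∀ v : Fin N → ℝ,
      (∀ z : Fin N → ℝ, A.mulVec z = 0 → (∑ i, v i * z i) = 0) →
      σ * l2 v ≤ l2 (A.mulVec v))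
    (M0 : ℝ) (hM0 : 0 < M0) (C1 C2 : ℝ)
    (hC1 : C1 = F M0 / M0 * ((1 - γ) / (1 + γ)))
    (hC2 : C2 = (α * Real.sqrt N + C1) / (C1 * σ)) :
    ∀ xs x : Fin N → ℝ, l0 xs ≤ K → l2 (x - xs) ≤ M0 →
      C1 * (l2 (x - xs) - C2 * l2 (A.mulVec (x - xs))) ≤
        (∑ i, F (x i)) - ∑ i, F (xs i) :=
  stmt9_general F ρ α hF hα A K γ hγ0 hγ1 hNSC σ hσ hσmin M0 hM0 C1 C2 hC1 hC2
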